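/- If a path X : [0,T] → ℝ^d satisfies Property (RIE) relative to p ∈ (2,3) and partitions (P^n), and X^n is the piecewise constant discretization of X along P^n, then X^n satisfies Property (RIE) relative to p and any sequence of partitions (Q^m)_{m∈ℕ} with P^n ⊆ Q^m for every m and |Q^m| → 0 as m → ∞. -/

import Mathlib

open scoped ENNReal Classical
open Filter MeasureTheory ProbabilityTheory

noncomputable section

/-- The `p`-variation of a path `X` over `[0,T]`, as an extended nonnegative real:
`(sup over partitions of Σ ‖increment‖^p)^(1/p)`. -/
def epVar {E : Type*} [NormedAddCommGroup E] (X : ℝ → E) (p T : ℝ) : ℝ≥0∞ :=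
  (⨆ (n : ℕ) (t : ℕ → ℝ) (_ : Monotone t) (_ : t 0 = 0) (_ : t n = T),
    ∑ i ∈ Finset.range n, ENNReal.ofReal (‖X (t (i + 1)) - X (t i)‖ ^ p)) ^ (1 / p)

/-- The `r`-variation of a two-parameter function `A` over `[0,T]`. -/
def epVar2 {E : Type*} [NormedAddCommGroup E] (A : ℝ → ℝ → E) (r T : ℝ) : ℝ≥0∞ :=
  (⨆ (n : ℕ) (t : ℕ → ℝ) (_ : Monotone t) (_ : t 0 = 0) (_ : t n = T),
    ∑ i ∈ Finset.range n, ENNReal.ofReal (‖A (t i) (t (i + 1))‖ ^ r)) ^ (1 / r)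

/-- Piecewise constant approximation of `X` along the partition `t 0 ≤ t 1 ≤ ... ≤ t N`. -/
def pcApprox {E : Type*} (X : ℝ → E) (N : ℕ) (t : ℕ → ℝ) (s : ℝ) : E :=
  X (t (Nat.findGreatest (fun k => t k ≤ s) N))

/-- Tensor (outer) product of two Euclidean vectors, with the Frobenius (Euclidean) norm. -/
def tp2 {d e : ℕ} (v : EuclideanSpace ℝ (Fin d)) (w : EuclideanSpace ℝ (Fin e)) :
    EuclideanSpace ℝ (Fin d × Fin e) :=
  (WithLp.equiv 2 (Fin d × Fin e → ℝ)).symm (fun q => v q.1 * w q.2)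

def tp {d : ℕ} (v w : EuclideanSpace ℝ (Fin d)) : EuclideanSpace ℝ (Fin d × Fin d) :=
  tp2 v w

/-- Clamping of `x` into the interval `[s,u]`. -/
def clamp (s u x : ℝ) : ℝ := max s (min x u)

/-- The second-level lift `𝕏ⁿ_{s,u} = ∫_s^u (Xⁿ_r − Xⁿ_s) ⊗ dXⁿ_r` of a path `Xn` which is
piecewise constant along the partition `t`, written as a left-point Riemann-Stieltjes sum. -/
def pcLift {d : ℕ} (N : ℕ) (Xn : ℝ → EuclideanSpace ℝ (Fin d)) (t : ℕ → ℝ) (s u : ℝ) :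
    EuclideanSpace ℝ (Fin d × Fin d) :=
  ∑ i ∈ Finset.range N,
    tp (Xn (clamp s u (t i)) - Xn s) (Xn (clamp s u (t (i + 1))) - Xn (clamp s u (t i)))

/-- The left-point Riemann sum `∫_0^u Xⁿ_r ⊗ dX_r = Σ_k X_{t_k} ⊗ (X_{t_{k+1}∧u} − X_{t_k∧u})`. -/
def riemannSum {d : ℕ} (N : ℕ) (X : ℝ → EuclideanSpace ℝ (Fin d)) (t : ℕ → ℝ) (u : ℝ) :
    EuclideanSpace ℝ (Fin d × Fin d) :=
  ∑ k ∈ Finset.range N, tp (X (t k)) (X (min (t (k + 1)) u) - X (min (t k) u))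

/-- The left-point Riemann sum `∫_s^u Xⁿ_{s,r} ⊗ dX_r`. -/
def mixedInt {d : ℕ} (N : ℕ) (X : ℝ → EuclideanSpace ℝ (Fin d)) (t : ℕ → ℝ) (s u : ℝ) :
    EuclideanSpace ℝ (Fin d × Fin d) :=
  ∑ i ∈ Finset.range N,
    tp (pcApprox X N t (clamp s u (t i)) - pcApprox X N t s)
      (X (clamp s u (t (i + 1))) - X (clamp s u (t i)))

/-- A control function on the simplex `Δ_T`: nonnegative and superadditive. -/
def IsControl (T : ℝ) (w : ℝ → ℝ → ℝ) : Prop :=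
  (∀ s t, 0 ≤ s → s ≤ t → t ≤ T → 0 ≤ w s t) ∧
  (∀ s u t, 0 ≤ s → s ≤ u → u ≤ t → t ≤ T → w s u + w u t ≤ w s t)

/-- Property (RIE) for a path `X` relative to `p ∈ (2,3)` and a sequence of partitions
`t n 0 ≤ ... ≤ t n (N n)` of `[0,T]` with vanishing mesh. -/
structure PropertyRIE {d : ℕ} (p T : ℝ) (X : ℝ → EuclideanSpace ℝ (Fin d))
    (N : ℕ → ℕ) (t : ℕ → ℕ → ℝ) : Prop where
  mono : ∀ n, Monotone (t n)
  zero : ∀ n, t n 0 = 0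
  top : ∀ n, t n (N n) = T
  mesh : ∀ ε > 0, ∃ m, ∀ n ≥ m, ∀ i < N n, t n (i + 1) - t n i < ε
  unif : TendstoUniformlyOn (fun n s => pcApprox X (N n) (t n) s) X atTop (Set.Icc 0 T)
  riemann : ∃ I : ℝ → EuclideanSpace ℝ (Fin d × Fin d),
    TendstoUniformlyOn (fun n u => riemannSum (N n) X (t n) u) I atTop (Set.Icc 0 T)
  control : ∃ w : ℝ → ℝ → ℝ, IsControl T w ∧
    (∀ s u, 0 ≤ s → s ≤ u → u ≤ T → ‖X u - X s‖ ^ p ≤ w s u) ∧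
    (∀ n, ∀ k ℓ : ℕ, k < ℓ → ℓ ≤ N n →
      ‖riemannSum (N n) X (t n) (t n ℓ) - riemannSum (N n) X (t n) (t n k) -
          tp (X (t n k)) (X (t n ℓ) - X (t n k))‖ ^ (p / 2) ≤ w (t n k) (t n ℓ))

/-!
`Xⁿ` takes only the values `X(tⁿ_j)`. Along a partition refining `𝒫ⁿ`, its discretization and its
left-point Riemann sums only see, at each time, the last point of `𝒫ⁿ` to the left: the
discretization is `Xⁿ` itself, and the Riemann sum up to `u` is `Σ X_{tⁿ_j} ⊗ X_{tⁿ_j, tⁿ_{j+1}}`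
over `tⁿ_{j+1} ≤ u`, whatever the refinement. For the control, any quantity that depends only on
these indices at `s` and `u` and vanishes when they coincide is at most `C · #(𝒫ⁿ ∩ (s, u])`,
which is additive in `(s, u]`.
-/

open Finset

/-- Junk value `0` when no `τ j` is `≤ x`, hence the hypotheses `τ 0 ≤ x` below. -/
def lastGridIndex (τ : ℕ → ℝ) (I : ℕ) (x : ℝ) : ℕ :=
  Nat.findGreatest (fun k => τ k ≤ x) I

section lastGridIndex

variable {τ : ℕ → ℝ} {I : ℕ}

lemma lastGridIndex_le (x : ℝ) : lastGridIndex τ I x ≤ I :=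
  Nat.findGreatest_le I

lemma lastGridIndex_mono : Monotone (lastGridIndex τ I) := fun _ _ hxy =>
  Nat.findGreatest_mono_left (fun _ hk => hk.trans hxy) I

lemma le_lastGridIndex {j : ℕ} {x : ℝ} (hj : j ≤ I) (hjx : τ j ≤ x) :
    j ≤ lastGridIndex τ I x :=
  Nat.le_findGreatest hj hjx

lemma apply_lastGridIndex_le {x : ℝ} (hx : τ 0 ≤ x) : τ (lastGridIndex τ I x) ≤ x :=
  Nat.findGreatest_spec (P := fun k => τ k ≤ x) (Nat.zero_le I) hx

lemma lastGridIndex_eq_of_forall_notMem_Ioc {s u : ℝ} (hs : τ 0 ≤ s) (hsu : s ≤ u)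
    (h : ∀ j ≤ I, τ j ∉ Set.Ioc s u) : lastGridIndex τ I u = lastGridIndex τ I s := by
  refine le_antisymm (le_lastGridIndex (lastGridIndex_le u) ?_) (lastGridIndex_mono hsu)
  by_contra hlt
  exact h _ (lastGridIndex_le u) ⟨not_le.mp hlt, apply_lastGridIndex_le (hs.trans hsu)⟩

lemma apply_eq_of_lastGridIndex_lt_of_le (hτ : Monotone τ) {x y : ℝ} (hx : τ 0 ≤ x)
    (hxy : x ≤ y) (hgap : ∀ i ≤ I, τ i ∉ Set.Ioo x y) {j : ℕ}
    (hj₁ : lastGridIndex τ I x < j) (hj₂ : j ≤ lastGridIndex τ I y) : τ j = y := by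
  have hjy : τ j ≤ y := (hτ hj₂).trans (apply_lastGridIndex_le (hx.trans hxy))
  have hxj : x < τ j := by
    by_contra hjx
    exact hj₁.not_ge (le_lastGridIndex (hj₂.trans (lastGridIndex_le y)) (not_lt.mp hjx))
  by_contra hne
  exact hgap j (hj₂.trans (lastGridIndex_le y)) ⟨hxj, lt_of_le_of_ne hjy hne⟩

variable {r : ℕ → ℝ} {K : ℕ}

lemma lastGridIndex_apply_lastGridIndex_of_refines (hr : Monotone r)
    (href : ∀ i ≤ I, ∃ j ≤ K, r j = τ i) {x : ℝ} (hτx : τ 0 ≤ x) (hrx : r 0 ≤ x) :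
    lastGridIndex τ I (r (lastGridIndex r K x)) = lastGridIndex τ I x := by
  refine le_antisymm (lastGridIndex_mono (apply_lastGridIndex_le hrx)) ?_
  obtain ⟨j, hjK, hj⟩ := href _ (lastGridIndex_le x)
  refine le_lastGridIndex (lastGridIndex_le x) ?_
  rw [← hj]
  exact hr (le_lastGridIndex hjK (hj ▸ apply_lastGridIndex_le hτx))

theorem pcApprox_pcApprox_of_refines {E : Type*} (X : ℝ → E) (hr : Monotone r)
    (href : ∀ i ≤ I, ∃ j ≤ K, r j = τ i) {x : ℝ} (hτx : τ 0 ≤ x) (hrx : r 0 ≤ x) :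
    pcApprox (pcApprox X I τ) K r x = pcApprox X I τ x :=
  congrArg (X ∘ τ) (lastGridIndex_apply_lastGridIndex_of_refines hr href hτx hrx)

lemma forall_notMem_Ioo_min_of_refines (hr : Monotone r) (href : ∀ i ≤ I, ∃ j ≤ K, r j = τ i)
    (k : ℕ) (u : ℝ) : ∀ i ≤ I, τ i ∉ Set.Ioo (min (r k) u) (min (r (k + 1)) u) := by
  rintro i hi ⟨h₁, h₂⟩
  obtain ⟨j, -, hj⟩ := href i hi
  have hiu : τ i < u := h₂.trans_le (min_le_right _ _)
  have hki : r k < τ i := by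
    rwa [min_eq_left (not_lt.mp fun hu => (min_eq_right hu.le ▸ h₁).not_gt hiu)] at h₁
  exact hr.ne_of_lt_of_lt_nat k hki (h₂.trans_le (min_le_left _ _)) j hj

end lastGridIndex

section LeftPointSum

variable {d : ℕ}

lemma tp_zero_right (v : EuclideanSpace ℝ (Fin d)) : tp v 0 = 0 := by
  ext q; simp [tp, tp2]

lemma sum_Ico_tp_eq_of_eq_last {Z : ℕ → EuclideanSpace ℝ (Fin d)} {a b : ℕ} (hab : a ≤ b)
    (h : ∀ j, a < j → j ≤ b → Z j = Z b) :
    ∑ j ∈ Ico a b, tp (Z j) (Z (j + 1) - Z j) = tp (Z a) (Z b - Z a) := by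
  rcases hab.eq_or_lt with rfl | hlt
  · simp [tp_zero_right]
  rw [sum_eq_sum_Ico_succ_bot hlt, h (a + 1) (by omega) hlt, sum_eq_zero, add_zero]
  intro j hj
  rw [mem_Ico] at hj
  rw [h j (by omega) hj.2.le, h (j + 1) (by omega) hj.2, sub_self, tp_zero_right]

lemma sum_range_tp_comp_eq_sum_Ico {Z : ℕ → EuclideanSpace ℝ (Fin d)} {g : ℕ → ℕ}
    (hg : Monotone g) {K : ℕ}
    (h : ∀ k < K, ∀ j, g k < j → j ≤ g (k + 1) → Z j = Z (g (k + 1))) :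
    ∑ k ∈ range K, tp (Z (g k)) (Z (g (k + 1)) - Z (g k)) =
      ∑ j ∈ Ico (g 0) (g K), tp (Z j) (Z (j + 1) - Z j) := by
  induction K with
  | zero => simp
  | succ K ih =>
    rw [sum_range_succ, ih fun k hk => h k (by omega),
      ← sum_Ico_consecutive _ (hg K.zero_le) (hg K.le_succ),
      sum_Ico_tp_eq_of_eq_last (hg K.le_succ) (h K K.lt_succ_self)]

lemma riemannSum_eq_sum_min {K : ℕ} (Y : ℝ → EuclideanSpace ℝ (Fin d)) {r : ℕ → ℝ}
    (hr : Monotone r) (u : ℝ) :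
    riemannSum K Y r u =
      ∑ k ∈ range K, tp (Y (min (r k) u)) (Y (min (r (k + 1)) u) - Y (min (r k) u)) := by
  refine sum_congr rfl fun k _ => ?_
  rcases le_total (r k) u with h | h
  · rw [min_eq_left h]
  · rw [min_eq_right h, min_eq_right (h.trans (hr k.le_succ)), sub_self, tp_zero_right,
      tp_zero_right]

theorem riemannSum_pcApprox_of_refines (X : ℝ → EuclideanSpace ℝ (Fin d)) {I K : ℕ}
    {τ r : ℕ → ℝ} (hτ : Monotone τ) (hr : Monotone r) (href : ∀ i ≤ I, ∃ j ≤ K, r j = τ i)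
    (h0 : τ 0 ≤ r 0) {u : ℝ} (hu₀ : r 0 ≤ u) (huK : u ≤ r K) :
    riemannSum K (pcApprox X I τ) r u =
      ∑ j ∈ Ico (lastGridIndex τ I (r 0)) (lastGridIndex τ I u),
        tp (X (τ j)) (X (τ (j + 1)) - X (τ j)) := by
  have hmin : ∀ k, τ 0 ≤ min (r k) u := fun k =>
    le_min (h0.trans (hr k.zero_le)) (h0.trans hu₀)
  have key := sum_range_tp_comp_eq_sum_Ico (Z := X ∘ τ) (K := K)
    (g := fun k => lastGridIndex τ I (min (r k) u))
    (fun k l hkl => lastGridIndex_mono (min_le_min_right u (hr hkl))) fun k _ j hj₁ hj₂ => by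
      have hgap := forall_notMem_Ioo_min_of_refines hr href k u
      have hxy : min (r k) u ≤ min (r (k + 1)) u := min_le_min_right u (hr k.le_succ)
      simp only [Function.comp_apply,
        apply_eq_of_lastGridIndex_lt_of_le hτ (hmin k) hxy hgap hj₁ hj₂,
        apply_eq_of_lastGridIndex_lt_of_le hτ (hmin k) hxy hgap (hj₁.trans_le hj₂) le_rfl]
  rw [riemannSum_eq_sum_min _ hr]
  rwa [min_eq_left hu₀, min_eq_right huK] at key

theorem riemannSum_sub_riemannSum_pcApprox_of_refines (X : ℝ → EuclideanSpace ℝ (Fin d))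
    {I K : ℕ} {τ r : ℕ → ℝ} (hτ : Monotone τ) (hr : Monotone r)
    (href : ∀ i ≤ I, ∃ j ≤ K, r j = τ i) (h0 : τ 0 ≤ r 0) {s u : ℝ} (hs : r 0 ≤ s) (hsu : s ≤ u)
    (huK : u ≤ r K) :
    riemannSum K (pcApprox X I τ) r u - riemannSum K (pcApprox X I τ) r s =
      ∑ j ∈ Ico (lastGridIndex τ I s) (lastGridIndex τ I u),
        tp (X (τ j)) (X (τ (j + 1)) - X (τ j)) := by
  rw [riemannSum_pcApprox_of_refines X hτ hr href h0 (hs.trans hsu) huK,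
    riemannSum_pcApprox_of_refines X hτ hr href h0 hs (hsu.trans huK),
    ← sum_Ico_consecutive _ (lastGridIndex_mono hs) (lastGridIndex_mono hsu), add_sub_cancel_left]

end LeftPointSum

lemma isControl_mul_card_filter_Ioc {ι : Type*} (J : Finset ι) (τ : ι → ℝ) {C : ℝ}
    (hC : 0 ≤ C) (T : ℝ) :
    IsControl T fun s u => C * #{j ∈ J | τ j ∈ Set.Ioc s u} := by
  refine ⟨fun _ _ _ _ _ => by positivity, fun s u v _ hsu huv _ => le_of_eq ?_⟩
  have hdisj : Disjoint {j ∈ J | τ j ∈ Set.Ioc s u} {j ∈ J | τ j ∈ Set.Ioc u v} :=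
    disjoint_filter.2 fun _ _ h₁ h₂ => h₂.1.not_ge h₁.2
  rw [← mul_add, ← Nat.cast_add, ← card_union_of_disjoint hdisj, ← filter_or]
  simp only [← Set.mem_union, Set.Ioc_union_Ioc_eq_Ioc hsu huv]

theorem exists_isControl_apply_lastGridIndex_le (τ : ℕ → ℝ) (I : ℕ) (T : ℝ)
    (f : ℕ → ℕ → ℝ) (hf : ∀ a, f a a = 0) :
    ∃ w, IsControl T w ∧ ∀ s u, τ 0 ≤ s → s ≤ u →
      f (lastGridIndex τ I s) (lastGridIndex τ I u) ≤ w s u := by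
  obtain ⟨C, hC⟩ := ((range (I + 1) ×ˢ range (I + 1)).image fun ab => f ab.1 ab.2).bddAbove
  refine ⟨_, isControl_mul_card_filter_Ioc (range (I + 1)) τ (le_max_right C 0) T,
    fun s u hs hsu => ?_⟩
  rcases eq_empty_or_nonempty {j ∈ range (I + 1) | τ j ∈ Set.Ioc s u} with hem | hne
  · have hgap : ∀ j ≤ I, τ j ∉ Set.Ioc s u := fun j hj =>
      filter_eq_empty_iff.1 hem (mem_range.2 (Nat.lt_succ_of_le hj))
    rw [lastGridIndex_eq_of_forall_notMem_Ioc hs hsu hgap, hf, hem, card_empty]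
    simp
  · have hmem : f (lastGridIndex τ I s) (lastGridIndex τ I u) ∈
        (range (I + 1) ×ˢ range (I + 1)).image fun ab => f ab.1 ab.2 :=
      mem_image_of_mem (fun ab : ℕ × ℕ => f ab.1 ab.2) (a := (_, _)) (mem_product.2
        ⟨mem_range.2 (Nat.lt_add_one_of_le (lastGridIndex_le s)),
          mem_range.2 (Nat.lt_add_one_of_le (lastGridIndex_le u))⟩)
    calc f (lastGridIndex τ I s) (lastGridIndex τ I u)
        ≤ max C 0 := (hC hmem).trans (le_max_left _ _)
      _ ≤ max C 0 * #{j ∈ range (I + 1) | τ j ∈ Set.Ioc s u} :=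
        le_mul_of_one_le_right (le_max_right _ _) (by exact_mod_cast hne.card_pos)

lemma tendstoUniformlyOn_of_eqOn {ι α β : Type*} [UniformSpace β] {F : ι → α → β} {f : α → β}
    {l : Filter ι} {s : Set α} (h : ∀ n, Set.EqOn (F n) f s) : TendstoUniformlyOn F f l s :=
  fun _ hU => Eventually.of_forall fun n x hx => by
    rw [h n hx]
    exact refl_mem_uniformity hU

theorem pcApprox_satisfies_RIE_general (d : ℕ) (p T : ℝ) (hp2 : 2 < p)
    (X : ℝ → EuclideanSpace ℝ (Fin d)) (N : ℕ → ℕ) (t : ℕ → ℕ → ℝ)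
    (hX : PropertyRIE p T X N t) (n : ℕ)
    (M : ℕ → ℕ) (q : ℕ → ℕ → ℝ)
    (hqmono : ∀ m, Monotone (q m)) (hq0 : ∀ m, q m 0 = 0) (hqT : ∀ m, q m (M m) = T)
    (hqmesh : ∀ ε > 0, ∃ m₀, ∀ m ≥ m₀, ∀ i < M m, q m (i + 1) - q m i < ε)
    (hsub : ∀ m, ∀ i ≤ N n, ∃ j ≤ M m, q m j = t n i) :
    PropertyRIE p T (pcApprox X (N n) (t n)) M q := by
  have hτ0 : t n 0 = 0 := hX.zero n
  have hriemann : ∀ m, ∀ u ∈ Set.Icc 0 T, riemannSum (M m) (pcApprox X (N n) (t n)) (q m) u =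
      riemannSum (N n) (pcApprox X (N n) (t n)) (t n) u := fun m u hu => by
    rw [riemannSum_pcApprox_of_refines X (hX.mono n) (hqmono m) (hsub m) (by rw [hτ0, hq0])
        (hq0 m ▸ hu.1) (hqT m ▸ hu.2),
      riemannSum_pcApprox_of_refines X (hX.mono n) (hX.mono n) (fun i hi => ⟨i, hi, rfl⟩) le_rfl
        (hτ0 ▸ hu.1) (hX.top n ▸ hu.2), hq0, hτ0]
  refine ⟨hqmono, hq0, hqT, hqmesh,
    tendstoUniformlyOn_of_eqOn fun m x hx =>
      pcApprox_pcApprox_of_refines X (hqmono m) (hsub m) (hτ0 ▸ hx.1) (hq0 m ▸ hx.1),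
    ⟨_, tendstoUniformlyOn_of_eqOn hriemann⟩, ?_⟩
  set Z := fun j => X (t n j)
  obtain ⟨w, hw, hle⟩ := exists_isControl_apply_lastGridIndex_le (t n) (N n) T
    (fun a b => max (‖Z b - Z a‖ ^ p)
      (‖∑ j ∈ Ico a b, tp (Z j) (Z (j + 1) - Z j) - tp (Z a) (Z b - Z a)‖ ^ (p / 2)))
    fun a => by simp [tp_zero_right, Real.zero_rpow, (by linarith : p ≠ 0)]
  refine ⟨w, hw, fun s u hs hsu _ => (le_max_left _ _).trans (hle s u (hτ0 ▸ hs) hsu),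
    fun m k ℓ hkℓ hℓ => ?_⟩
  have hk : q m 0 ≤ q m k := hqmono m k.zero_le
  rw [riemannSum_sub_riemannSum_pcApprox_of_refines X (hX.mono n) (hqmono m) (hsub m)
    (by rw [hτ0, hq0]) hk (hqmono m hkℓ.le) (hqmono m hℓ)]
  exact (le_max_right _ _).trans (hle _ _ (hτ0 ▸ hq0 m ▸ hk) (hqmono m hkℓ.le))

/-- if `X` satisfies Property (RIE) relative to `p` and `(𝒫ⁿ)`, then the
piecewise constant discretization `Xⁿ` satisfies Property (RIE) relative to `p` and any
sequence of partitions `(𝒬ᵐ)` refining `𝒫ⁿ` with vanishing mesh. -/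
theorem pcApprox_satisfies_RIE (d : ℕ) (p T : ℝ) (hp2 : 2 < p) (hp3 : p < 3) (hT : 0 < T)
    (X : ℝ → EuclideanSpace ℝ (Fin d)) (N : ℕ → ℕ) (t : ℕ → ℕ → ℝ)
    (hX : PropertyRIE p T X N t) (n : ℕ)
    (M : ℕ → ℕ) (q : ℕ → ℕ → ℝ)
    (hqmono : ∀ m, Monotone (q m)) (hq0 : ∀ m, q m 0 = 0) (hqT : ∀ m, q m (M m) = T)
    (hqmesh : ∀ ε > 0, ∃ m₀, ∀ m ≥ m₀, ∀ i < M m, q m (i + 1) - q m i < ε)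
    (hsub : ∀ m, ∀ i ≤ N n, ∃ j ≤ M m, q m j = t n i) :
    PropertyRIE p T (pcApprox X (N n) (t n)) M q :=
  pcApprox_satisfies_RIE_general d p T hp2 X N t hX n M q hqmono hq0 hqT hqmesh hsub
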